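/- arXiv:2503.00365 — 5 statements merged into one kernel-verified Lean document; each statement's English description precedes it below -/
import Mathlib

section
/- For every l with 1 < l < 2 there exists a constant C_l > 0 such that for all vectors a, b in ℝ^N: |a-b|^l ≤ C_l ((|a|^{l-2}a - |b|^{l-2}b)·(a-b))^{l/2} (|a|^l + |b|^l)^{(2-l)/2}. -/
/-!
With `A = ‖a‖`, `B = ‖b‖`, `s = ⟪a, b⟫`, both `⟪‖a‖ ^ (l - 2) • a - ‖b‖ ^ (l - 2) • b, a - b⟫ =
A ^ l + B ^ l - (A ^ (l - 2) + B ^ (l - 2)) * s` and `‖a - b‖ ^ 2 = A ^ 2 + B ^ 2 - 2 * s` are affine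
in `s ∈ [-A * B, A * B]`, so the key estimate
`(l - 1) * ‖a - b‖ ^ 2 * (A + B) ^ (l - 2) ≤ ⟪‖a‖ ^ (l - 2) • a - ‖b‖ ^ (l - 2) • b, a - b⟫`
only has to be checked for collinear `a`, `b`. For `s = A * B` it follows from Bernoulli's inequality
`(B / A) ^ (l - 1) ≤ 1 + (l - 1) * (B / A - 1)`, for `s = -(A * B)` from the subadditivity of
`x ↦ x ^ (l - 1)`. Raising it to the power `l / 2` and using `(A + B) ^ l ≤ 2 ^ (l - 1) * (A ^ l + B ^ l)`
gives the theorem.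
-/

open Real
open scoped RealInnerProductSpace

lemma Real.rpow_sub_one_mul_self {x y : ℝ} (hx : 0 ≤ x) (hy : y ≠ 0) : x ^ (y - 1) * x = x ^ y := by
  rw [← rpow_add_one' hx (by simpa), sub_add_cancel]

lemma Real.rpow_sub_two_mul_self {x y : ℝ} (hx : 0 ≤ x) (hy : y ≠ 1) :
    x ^ (y - 2) * x = x ^ (y - 1) := by
  rw [← rpow_sub_one_mul_self hx (sub_ne_zero.2 hy), sub_sub, one_add_one_eq_two]

lemma Real.rpow_sub_two_mul_sq {x y : ℝ} (hx : 0 ≤ x) (hy : y ≠ 0) : x ^ (y - 2) * x ^ 2 = x ^ y := by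
  rw [← rpow_two, ← rpow_add' hx (by simpa), sub_add_cancel]

lemma Real.add_rpow_le_two_rpow_mul {a b p : ℝ} (ha : 0 ≤ a) (hb : 0 ≤ b) (hp : 1 ≤ p) :
    (a + b) ^ p ≤ 2 ^ (p - 1) * (a ^ p + b ^ p) := by
  lift a to NNReal using ha
  lift b to NNReal using hb
  exact_mod_cast NNReal.rpow_add_le_mul_rpow_add_rpow a b hp

section Scalar

variable {p l A B s : ℝ}

lemma mul_sub_mul_add_rpow_sub_one_le_rpow_sub_rpow (hp0 : 0 ≤ p) (hp1 : p ≤ 1) (hB : 0 ≤ B)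
    (hBA : B ≤ A) : p * (A - B) * (A + B) ^ (p - 1) ≤ A ^ p - B ^ p := by
  rcases (hB.trans hBA).eq_or_lt with hA0 | hA
  · obtain rfl : B = 0 := le_antisymm (hBA.trans hA0.ge) hB
    simp [← hA0]
  have hBA0 : 0 ≤ B / A := div_nonneg hB hA.le
  have bernoulli : (B / A) ^ p ≤ 1 + p * (B / A - 1) := by
    simpa using rpow_one_add_le_one_add_mul_self (s := B / A - 1) (by linarith) hp0 hp1
  calc p * (A - B) * (A + B) ^ (p - 1) ≤ p * (A - B) * A ^ (p - 1) := by
        refine mul_le_mul_of_nonneg_left ?_ (mul_nonneg hp0 (sub_nonneg.2 hBA))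
        exact rpow_le_rpow_of_nonpos hA (by linarith) (by linarith)
    _ = (1 - (1 + p * (B / A - 1))) * A ^ p := by
        rw [rpow_sub_one hA.ne']
        field_simp
        ring
    _ ≤ (1 - (B / A) ^ p) * A ^ p := by gcongr
    _ = A ^ p - B ^ p := by
        rw [sub_mul, one_mul, ← mul_rpow hBA0 hA.le, div_mul_cancel₀ B hA.ne']

lemma mul_sq_sub_mul_add_rpow_le (hl1 : 1 < l) (hl2 : l ≤ 2) (hA : 0 ≤ A) (hB : 0 ≤ B) :
    (l - 1) * (A - B) ^ 2 * (A + B) ^ (l - 2) ≤ (A ^ (l - 1) - B ^ (l - 1)) * (A - B) := by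
  wlog hBA : B ≤ A generalizing A B
  · have := this hB hA (by linarith)
    rw [add_comm] at this
    linarith
  have h := mul_sub_mul_add_rpow_sub_one_le_rpow_sub_rpow (p := l - 1) (by linarith) (by linarith)
    hB hBA
  rw [sub_sub, one_add_one_eq_two] at h
  calc (l - 1) * (A - B) ^ 2 * (A + B) ^ (l - 2)
      = (l - 1) * (A - B) * (A + B) ^ (l - 2) * (A - B) := by ring
    _ ≤ (A ^ (l - 1) - B ^ (l - 1)) * (A - B) := by gcongr

lemma mul_add_sq_mul_add_rpow_le (hl1 : 1 < l) (hl2 : l ≤ 2) (hA : 0 ≤ A) (hB : 0 ≤ B) :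
    (l - 1) * (A + B) ^ 2 * (A + B) ^ (l - 2) ≤ (A ^ (l - 1) + B ^ (l - 1)) * (A + B) := by
  have hAB : 0 ≤ A + B := add_nonneg hA hB
  have hsub := rpow_add_le_add_rpow hA hB (p := l - 1) (by linarith) (by linarith)
  calc (l - 1) * (A + B) ^ 2 * (A + B) ^ (l - 2)
      = (l - 1) * ((A + B) ^ (l - 2) * (A + B)) * (A + B) := by ring
    _ = (l - 1) * (A + B) ^ (l - 1) * (A + B) := by rw [rpow_sub_two_mul_self hAB (by linarith)]
    _ ≤ 1 * (A + B) ^ (l - 1) * (A + B) := by gcongr; linarith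
    _ ≤ (A ^ (l - 1) + B ^ (l - 1)) * (A + B) := by gcongr; linarith

lemma mul_sq_sub_mul_add_rpow_le_of_abs_le (hl1 : 1 < l) (hl2 : l ≤ 2) (hA : 0 ≤ A) (hB : 0 ≤ B)
    (hs : |s| ≤ A * B) :
    (l - 1) * (A ^ 2 + B ^ 2 - 2 * s) * (A + B) ^ (l - 2) ≤
      A ^ l + B ^ l - (A ^ (l - 2) + B ^ (l - 2)) * s := by
  obtain ⟨hs₁, hs₂⟩ := abs_le.mp hs
  have hA₁ := rpow_sub_one_mul_self hA (y := l) (by linarith)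
  have hB₁ := rpow_sub_one_mul_self hB (y := l) (by linarith)
  have hA₂ := rpow_sub_two_mul_self hA (y := l) (by linarith)
  have hB₂ := rpow_sub_two_mul_self hB (y := l) (by linarith)
  -- both sides are affine in `s`, so it suffices to treat the endpoints `s = ± A * B`
  have at_aligned : A ^ l + B ^ l - (A ^ (l - 2) + B ^ (l - 2)) * s =
      (A ^ (l - 1) - B ^ (l - 1)) * (A - B) + (A ^ (l - 2) + B ^ (l - 2)) * (A * B - s) := by
    linear_combination -hA₁ - hB₁ - B * hA₂ - A * hB₂
  have at_opposite : A ^ l + B ^ l - (A ^ (l - 2) + B ^ (l - 2)) * s =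
      (A ^ (l - 1) + B ^ (l - 1)) * (A + B) - (A ^ (l - 2) + B ^ (l - 2)) * (A * B + s) := by
    linear_combination -hA₁ - hB₁ + B * hA₂ + A * hB₂
  have aligned := mul_sq_sub_mul_add_rpow_le hl1 hl2 hA hB
  have opposite := mul_add_sq_mul_add_rpow_le hl1 hl2 hA hB
  rcases le_total (A ^ (l - 2) + B ^ (l - 2)) (2 * (l - 1) * (A + B) ^ (l - 2)) with hc | hc
  · linarith [mul_nonneg (sub_nonneg.2 hc) (show 0 ≤ A * B + s by linarith)]
  · linarith [mul_nonneg (sub_nonneg.2 hc) (show 0 ≤ A * B - s by linarith)]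

end Scalar

section InnerProductSpace

variable {E : Type*} [NormedAddCommGroup E] [InnerProductSpace ℝ E] {l : ℝ}

lemma inner_rpow_smul_sub_rpow_smul (hl : l ≠ 0) (a b : E) :
    ⟪‖a‖ ^ (l - 2) • a - ‖b‖ ^ (l - 2) • b, a - b⟫ =
      ‖a‖ ^ l + ‖b‖ ^ l - (‖a‖ ^ (l - 2) + ‖b‖ ^ (l - 2)) * ⟪a, b⟫ := by
  simp only [inner_sub_left, inner_sub_right, real_inner_smul_left, real_inner_self_eq_norm_sq,
    real_inner_comm a b]
  rw [← rpow_sub_two_mul_sq (norm_nonneg a) hl, ← rpow_sub_two_mul_sq (norm_nonneg b) hl]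
  ring

lemma mul_norm_sub_sq_mul_rpow_le_inner (hl1 : 1 < l) (hl2 : l ≤ 2) (a b : E) :
    (l - 1) * ‖a - b‖ ^ 2 * (‖a‖ + ‖b‖) ^ (l - 2) ≤
      ⟪‖a‖ ^ (l - 2) • a - ‖b‖ ^ (l - 2) • b, a - b⟫ := by
  rw [inner_rpow_smul_sub_rpow_smul (by linarith), norm_sub_sq_real]
  convert mul_sq_sub_mul_add_rpow_le_of_abs_le hl1 hl2 (norm_nonneg a) (norm_nonneg b)
    (abs_real_inner_le_norm a b) using 2
  ring

lemma inner_rpow_smul_sub_rpow_smul_nonneg (hl1 : 1 < l) (hl2 : l ≤ 2) (a b : E) :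
    0 ≤ ⟪‖a‖ ^ (l - 2) • a - ‖b‖ ^ (l - 2) • b, a - b⟫ :=
  (mul_nonneg (mul_nonneg (by linarith) (sq_nonneg _)) (rpow_nonneg (by positivity) _)).trans
    (mul_norm_sub_sq_mul_rpow_le_inner hl1 hl2 a b)

lemma mul_norm_sub_sq_le_rpow_mul_inner (hl1 : 1 < l) (hl2 : l ≤ 2) (a b : E) :
    (l - 1) * ‖a - b‖ ^ 2 ≤
      (‖a‖ + ‖b‖) ^ (2 - l) * ⟪‖a‖ ^ (l - 2) • a - ‖b‖ ^ (l - 2) • b, a - b⟫ := by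
  have hsum : 0 ≤ ‖a‖ + ‖b‖ := add_nonneg (norm_nonneg a) (norm_nonneg b)
  rcases hsum.eq_or_lt with h0 | hpos
  · have hab : ‖a - b‖ = 0 := le_antisymm (h0 ▸ norm_sub_le a b) (norm_nonneg _)
    calc (l - 1) * ‖a - b‖ ^ 2 = 0 := by rw [hab]; ring
      _ ≤ _ := mul_nonneg (rpow_nonneg hsum _) (inner_rpow_smul_sub_rpow_smul_nonneg hl1 hl2 a b)
  have hone : (‖a‖ + ‖b‖) ^ (2 - l) * (‖a‖ + ‖b‖) ^ (l - 2) = 1 := by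
    rw [← rpow_add hpos]
    norm_num
  calc (l - 1) * ‖a - b‖ ^ 2
      = (‖a‖ + ‖b‖) ^ (2 - l) * ((l - 1) * ‖a - b‖ ^ 2 * (‖a‖ + ‖b‖) ^ (l - 2)) := by
        linear_combination (-(l - 1) * ‖a - b‖ ^ 2) * hone
    _ ≤ _ := by gcongr; exact mul_norm_sub_sq_mul_rpow_le_inner hl1 hl2 a b

theorem norm_sub_rpow_le_inner_rpow_mul (hl1 : 1 < l) (hl2 : l ≤ 2) (a b : E) :
    ‖a - b‖ ^ l ≤
      (l - 1) ^ (-(l / 2)) * 2 ^ ((l - 1) * ((2 - l) / 2)) *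
        ⟪‖a‖ ^ (l - 2) • a - ‖b‖ ^ (l - 2) • b, a - b⟫ ^ (l / 2) *
          (‖a‖ ^ l + ‖b‖ ^ l) ^ ((2 - l) / 2) := by
  set I := ⟪‖a‖ ^ (l - 2) • a - ‖b‖ ^ (l - 2) • b, a - b⟫
  have hl : 0 < l - 1 := by linarith
  have hsum : 0 ≤ ‖a‖ + ‖b‖ := add_nonneg (norm_nonneg a) (norm_nonneg b)
  have hI : 0 ≤ I := inner_rpow_smul_sub_rpow_smul_nonneg hl1 hl2 a b
  have hsq : ‖a - b‖ ^ 2 ≤ (l - 1)⁻¹ * ((‖a‖ + ‖b‖) ^ (2 - l) * I) := by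
    rw [inv_mul_eq_div, le_div_iff₀ hl, mul_comm]
    exact mul_norm_sub_sq_le_rpow_mul_inner hl1 hl2 a b
  have hsum_pow : ((‖a‖ + ‖b‖) ^ (2 - l)) ^ (l / 2) ≤
      2 ^ ((l - 1) * ((2 - l) / 2)) * (‖a‖ ^ l + ‖b‖ ^ l) ^ ((2 - l) / 2) := by
    calc ((‖a‖ + ‖b‖) ^ (2 - l)) ^ (l / 2) = ((‖a‖ + ‖b‖) ^ l) ^ ((2 - l) / 2) := by
          rw [← rpow_mul hsum, ← rpow_mul hsum]
          ring_nf
      _ ≤ (2 ^ (l - 1) * (‖a‖ ^ l + ‖b‖ ^ l)) ^ ((2 - l) / 2) := by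
          gcongr
          exact add_rpow_le_two_rpow_mul (norm_nonneg a) (norm_nonneg b) hl1.le
      _ = 2 ^ ((l - 1) * ((2 - l) / 2)) * (‖a‖ ^ l + ‖b‖ ^ l) ^ ((2 - l) / 2) := by
          rw [mul_rpow (by positivity) (by positivity), ← rpow_mul zero_le_two]
  calc ‖a - b‖ ^ l = (‖a - b‖ ^ 2) ^ (l / 2) := by
        rw [← rpow_natCast_mul (norm_nonneg _)]
        ring_nf
    _ ≤ ((l - 1)⁻¹ * ((‖a‖ + ‖b‖) ^ (2 - l) * I)) ^ (l / 2) := by gcongr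
    _ = (l - 1) ^ (-(l / 2)) * I ^ (l / 2) * ((‖a‖ + ‖b‖) ^ (2 - l)) ^ (l / 2) := by
        rw [mul_rpow (by positivity) (by positivity), mul_rpow (by positivity) hI,
          inv_rpow hl.le, ← rpow_neg hl.le]
        ring
    _ ≤ (l - 1) ^ (-(l / 2)) * I ^ (l / 2) *
          (2 ^ ((l - 1) * ((2 - l) / 2)) * (‖a‖ ^ l + ‖b‖ ^ l) ^ ((2 - l) / 2)) := by gcongr
    _ = _ := by ring

end InnerProductSpace

theorem stmt_1 (N : ℕ) (l : ℝ) (hl1 : 1 < l) (hl2 : l < 2) :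
    ∃ C : ℝ, 0 < C ∧ ∀ a b : EuclideanSpace ℝ (Fin N),
      ‖a - b‖ ^ l ≤
        C * (⟪(‖a‖ ^ (l - 2)) • a - (‖b‖ ^ (l - 2)) • b, a - b⟫) ^ (l / 2) *
          (‖a‖ ^ l + ‖b‖ ^ l) ^ ((2 - l) / 2) := by
  have hl : 0 < l - 1 := by linarith
  exact ⟨_, by positivity, norm_sub_rpow_le_inner_rpow_mul hl1 hl2.le⟩
end

section
/- Let 1 < δ < min{p,q} ≤ max{p,q} < r, let A, B > 0, and let λ, Ca, Cb > 0. Suppose a nonnegative real X satisfies the two conditions (r-p)/(r-δ) · A X^p + (r-q)/(r-δ) · B X^q ≤ λ Ca X^δ and (p-δ) A X^p ≤ λ (r-δ) Cb X^r with X > 0. Then λ ≥ min over t ∈ {p,q} of ((r-t)/(r-δ))^{(r-t)/(r-δ)} ((t-δ) S_t /((r-δ) Cb'))^{(t-δ)/(r-δ)} (S_t'/Ca')^{(r-t)/(r-δ)} for suitable constants; in particular, for each fixed positive constants there exists λ_0 > 0 (depending only on p, q, r, δ, Ca, Cb and the embedding constants) such that no such X exists when λ < λ_0. -/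
theorem stmt_3 (p q r δ A B Ca Cb : ℝ)
    (hδ : 1 < δ) (hδp : δ < p) (hδq : δ < q) (hpr : p < r) (hqr : q < r)
    (hA : 0 < A) (hB : 0 < B) (hCa : 0 < Ca) (hCb : 0 < Cb) :
    ∃ lam0 : ℝ, 0 < lam0 ∧ ∀ lam X : ℝ, 0 < lam → lam < lam0 → 0 < X →
      ¬((r - p) / (r - δ) * A * X ^ p + (r - q) / (r - δ) * B * X ^ q
            ≤ lam * Ca * X ^ δ ∧
        (p - δ) * A * X ^ p ≤ lam * (r - δ) * Cb * X ^ r) := by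
  have hrδ : 0 < r - δ := by linarith
  have hrp : 0 < r - p := by linarith
  have hpδ : 0 < p - δ := by linarith
  set K1 : ℝ := Ca * (r - δ) / ((r - p) * A) with hK1
  set K2 : ℝ := (p - δ) * A / ((r - δ) * Cb) with hK2
  have hK1pos : 0 < K1 := by positivity
  have hK2pos : 0 < K2 := by positivity
  set M : ℝ := K2 ^ (p - δ) / K1 ^ (r - p) with hM
  have hMpos : 0 < M := by positivity
  refine ⟨M ^ (1 / (r - δ)), by positivity, ?_⟩
  rintro lam X hlam hlt hX ⟨h1, h2⟩
  -- X^(p-δ) ≤ lam * K1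
  have hXp : (0:ℝ) < X ^ p := Real.rpow_pos_of_pos hX p
  have hXδ : (0:ℝ) < X ^ δ := Real.rpow_pos_of_pos hX δ
  have hXr : (0:ℝ) < X ^ r := Real.rpow_pos_of_pos hX r
  have hBterm : 0 ≤ (r - q) / (r - δ) * B * X ^ q := by
    have := (Real.rpow_pos_of_pos hX q).le
    have hrq : 0 < r - q := by linarith
    positivity
  have h1' : (r - p) / (r - δ) * A * X ^ p ≤ lam * Ca * X ^ δ := by linarith
  have hsub1 : X ^ (p - δ) = X ^ p / X ^ δ := Real.rpow_sub hX p δ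
  have hsub2 : X ^ (r - p) = X ^ r / X ^ p := Real.rpow_sub hX r p
  have h1'' : (r - p) * A * X ^ p ≤ lam * Ca * X ^ δ * (r - δ) := by
    rw [div_mul_eq_mul_div, div_mul_eq_mul_div, div_le_iff₀ hrδ] at h1'
    exact h1'
  have e1 : X ^ (p - δ) ≤ lam * K1 := by
    rw [hsub1, div_le_iff₀ hXδ, hK1]
    have heq : lam * (Ca * (r - δ) / ((r - p) * A)) * X ^ δ
        = lam * Ca * X ^ δ * (r - δ) / ((r - p) * A) := by ring
    rw [heq, le_div_iff₀ (mul_pos hrp hA)]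
    nlinarith [h1'']
  have e2 : K2 / lam ≤ X ^ (r - p) := by
    rw [hsub2, le_div_iff₀ hXp, hK2, div_div, div_mul_eq_mul_div, div_le_iff₀ (by positivity : 0 < (r - δ) * Cb * lam)]
    nlinarith [h2]
  -- raise to powers
  have e1' : (X ^ (p - δ)) ^ (r - p) ≤ (lam * K1) ^ (r - p) :=
    Real.rpow_le_rpow (Real.rpow_pos_of_pos hX _).le e1 hrp.le
  have e2' : (K2 / lam) ^ (p - δ) ≤ (X ^ (r - p)) ^ (p - δ) :=
    Real.rpow_le_rpow (by positivity) e2 hpδ.le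
  have hsw : (X ^ (r - p)) ^ (p - δ) = (X ^ (p - δ)) ^ (r - p) := by
    rw [← Real.rpow_mul hX.le, ← Real.rpow_mul hX.le, mul_comm]
  have key : (K2 / lam) ^ (p - δ) ≤ (lam * K1) ^ (r - p) := by
    calc (K2 / lam) ^ (p - δ) ≤ (X ^ (r - p)) ^ (p - δ) := e2'
      _ = (X ^ (p - δ)) ^ (r - p) := hsw
      _ ≤ (lam * K1) ^ (r - p) := e1'
  rw [Real.div_rpow hK2pos.le hlam.le, Real.mul_rpow hlam.le hK1pos.le,
    div_le_iff₀ (Real.rpow_pos_of_pos hlam _)] at key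
  have keyM : M ≤ lam ^ (r - δ) := by
    have hcomb : lam ^ (r - p) * lam ^ (p - δ) = lam ^ (r - δ) := by
      rw [← Real.rpow_add hlam]; ring_nf
    rw [hM, div_le_iff₀ (Real.rpow_pos_of_pos hK1pos _)]
    calc K2 ^ (p - δ) ≤ lam ^ (r - p) * K1 ^ (r - p) * lam ^ (p - δ) := key
      _ = lam ^ (r - δ) * K1 ^ (r - p) := by rw [mul_right_comm, hcomb]
  have hlt' : lam ^ (r - δ) < M := by
    have : lam ^ (r - δ) < (M ^ (1 / (r - δ))) ^ (r - δ) :=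
      Real.rpow_lt_rpow hlam.le hlt hrδ
    rwa [← Real.rpow_mul hMpos.le, one_div_mul_cancel hrδ.ne', Real.rpow_one] at this
  linarith
end

section
/- Let 1 < δ < p < q < r and A, B, D > 0. Define m(t) = A t^{p-δ} + B t^{q-δ} - D t^{r-δ} for t ≥ 0. Then there exists a unique t_max > 0 such that m is strictly increasing on (0, t_max) and strictly decreasing on (t_max, ∞); in particular m'(t_max) = 0, m(t_max) > 0, m(t) → -∞ as t → ∞. -/
open Filter Set Real Topology

/-!
Writing `α < β < γ` for the three exponents, `m'(t) = t^(γ-1) k(t)` with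
`k(t) = Aα t^(α-γ) + Bβ t^(β-γ) - Dγ`. Both powers in `k` are negative, so `k` decreases strictly
from `+∞` (at `0⁺`) to `-Dγ < 0` (at `∞`) and has exactly one zero `t_max`: the sign of `m'`
changes once, from `+` to `-`. Since `m(0⁺) = 0` and `m` increases up to `t_max`, `m(t_max) > 0`;
and `m(t) = t^γ (A t^(α-γ) + B t^(β-γ) - D)` with the bracket tending to `-D`, so `m → -∞`.
-/

lemma eq_of_strictMonoOn_Ioc_of_strictAntiOn_Ici {α β : Type*} [LinearOrder α] [Preorder β]
    {f : α → β} {a b c : α} (hab : a < b) (hac : a < c)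
    (hfb : StrictMonoOn f (Ioc a b)) (hfb' : StrictAntiOn f (Ici b))
    (hfc : StrictMonoOn f (Ioc a c)) (hfc' : StrictAntiOn f (Ici c)) : b = c := by
  rcases lt_trichotomy b c with h | h | h
  · exact absurd (hfc ⟨hab, h.le⟩ ⟨hac, le_rfl⟩ h) (hfb' (mem_Ici.2 le_rfl) h.le h).asymm
  · exact h
  · exact absurd (hfb ⟨hac, h.le⟩ ⟨hab, le_rfl⟩ h) (hfc' (mem_Ici.2 le_rfl) h.le h).asymm

lemma StrictMonoOn.lt_of_tendsto_nhdsGT {α β : Type*} [LinearOrder α] [TopologicalSpace α]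
    [OrderTopology α] [DenselyOrdered α] [LinearOrder β] [TopologicalSpace β]
    [OrderClosedTopology β] {f : α → β} {a b : α} {L : β} (hab : a < b)
    (hf : StrictMonoOn f (Ioc a b)) (hL : Tendsto f (𝓝[>] a) (𝓝 L)) : L < f b := by
  obtain ⟨c, hac, hcb⟩ := exists_between hab
  have : NeBot (𝓝[>] a) := nhdsGT_neBot_of_exists_gt ⟨b, hab⟩
  refine lt_of_le_of_lt (le_of_tendsto hL ?_) (hf ⟨hac, hcb.le⟩ ⟨hab, le_rfl⟩ hcb)
  filter_upwards [Ioo_mem_nhdsGT hac] with t ht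
  exact (hf ⟨ht.1, (ht.2.trans hcb).le⟩ ⟨hac, hcb.le⟩ ht.2).le

lemma strictMonoOn_Ioc_and_strictAntiOn_Ici_of_hasDerivAt {f f' : ℝ → ℝ} {a c : ℝ} (hac : a < c)
    (hf : ∀ t, a < t → HasDerivAt f (f' t) t) (hpos : ∀ t ∈ Ioo a c, 0 < f' t)
    (hneg : ∀ t, c < t → f' t < 0) : StrictMonoOn f (Ioc a c) ∧ StrictAntiOn f (Ici c) := by
  refine ⟨strictMonoOn_of_deriv_pos (convex_Ioc a c)
      (fun t ht ↦ (hf t ht.1).continuousAt.continuousWithinAt) fun t ht ↦ ?_,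
    strictAntiOn_of_deriv_neg (convex_Ici c)
      (fun t ht ↦ (hf t (hac.trans_le ht)).continuousAt.continuousWithinAt) fun t ht ↦ ?_⟩
  · rw [interior_Ioc] at ht
    rw [(hf t ht.1).deriv]
    exact hpos t ht
  · rw [interior_Ici] at ht
    rw [(hf t (hac.trans ht)).deriv]
    exact hneg t ht

lemma exists_pos_eq_zero_of_continuousOn_Ioi {g : ℝ → ℝ} (hg : ContinuousOn g (Ioi 0))
    (h0 : ∀ᶠ t in 𝓝[>] 0, 0 < g t) (hinf : ∀ᶠ t in atTop, g t < 0) :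
    ∃ c, 0 < c ∧ g c = 0 := by
  obtain ⟨x, hgx, hx⟩ := (h0.and self_mem_nhdsWithin).exists
  obtain ⟨y, hgy, hxy⟩ := (hinf.and (eventually_ge_atTop x)).exists
  obtain ⟨c, hc, hgc⟩ := intermediate_value_Icc' hxy
    (hg.mono fun t ht ↦ lt_of_lt_of_le hx ht.1) ⟨hgy.le, hgx.le⟩
  exact ⟨c, lt_of_lt_of_le hx hc.1, hgc⟩

section NegativeExponents

variable {a b c μ ν : ℝ}

lemma strictAntiOn_mul_rpow_add_mul_rpow_sub (ha : 0 < a) (hb : 0 ≤ b) (hμ : μ < 0)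
    (hν : ν ≤ 0) : StrictAntiOn (fun t ↦ a * t ^ μ + b * t ^ ν - c) (Ioi 0) := by
  intro x hx y hy hxy
  have hμxy := rpow_lt_rpow_of_neg hx hxy hμ
  have hνxy := rpow_le_rpow_of_nonpos hx hxy.le hν
  dsimp only
  linarith [mul_lt_mul_of_pos_left hμxy ha, mul_le_mul_of_nonneg_left hνxy hb]

lemma continuousOn_mul_rpow_add_mul_rpow_sub :
    ContinuousOn (fun t ↦ a * t ^ μ + b * t ^ ν - c) (Ioi 0) := by
  intro t ht
  have ht : t ≠ 0 := (mem_Ioi.mp ht).ne'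
  exact ((((continuousAt_rpow_const t μ (.inl ht)).const_mul a).add
    ((continuousAt_rpow_const t ν (.inl ht)).const_mul b)).sub continuousAt_const).continuousWithinAt

lemma tendsto_mul_rpow_add_mul_rpow_sub_nhdsGT_zero (ha : 0 < a) (hb : 0 ≤ b) (hμ : μ < 0) :
    Tendsto (fun t ↦ a * t ^ μ + b * t ^ ν - c) (𝓝[>] 0) atTop := by
  refine tendsto_atTop_mono' _ ?_
    (((tendsto_rpow_neg_nhdsGT_zero hμ).const_mul_atTop ha).atTop_add (tendsto_const_nhds (x := -c)))
  filter_upwards [self_mem_nhdsWithin] with t ht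
  have : 0 ≤ b * t ^ ν := mul_nonneg hb (rpow_nonneg (le_of_lt ht) _)
  linarith

lemma tendsto_mul_rpow_add_mul_rpow_sub_atTop (hμ : μ < 0) (hν : ν < 0) :
    Tendsto (fun t ↦ a * t ^ μ + b * t ^ ν - c) atTop (𝓝 (-c)) := by
  have hpow {e : ℝ} (he : e < 0) : Tendsto (fun t : ℝ ↦ t ^ e) atTop (𝓝 0) := by
    simpa using tendsto_rpow_neg_atTop (neg_pos.mpr he)
  simpa using (((hpow hμ).const_mul a).add ((hpow hν).const_mul b)).sub_const c

end NegativeExponents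

section ThreeTerm

variable {A B D α β γ : ℝ}

lemma mul_rpow_add_mul_rpow_sub_mul_rpow_eq {t : ℝ} (ht : 0 < t) :
    A * t ^ α + B * t ^ β - D * t ^ γ = t ^ γ * (A * t ^ (α - γ) + B * t ^ (β - γ) - D) := by
  have hsplit (e : ℝ) : t ^ e = t ^ γ * t ^ (e - γ) := by rw [← rpow_add ht, add_sub_cancel]
  rw [hsplit α, hsplit β]
  ring

lemma hasDerivAt_mul_rpow_add_mul_rpow_sub_mul_rpow {t : ℝ} (ht : 0 < t) :
    HasDerivAt (fun t ↦ A * t ^ α + B * t ^ β - D * t ^ γ)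
      (t ^ (γ - 1) * (A * α * t ^ (α - γ) + B * β * t ^ (β - γ) - D * γ)) t := by
  have hpow (e : ℝ) : HasDerivAt (fun t ↦ t ^ e) (e * t ^ (e - 1)) t :=
    hasDerivAt_rpow_const (.inl ht.ne')
  have hsplit (e : ℝ) : t ^ (e - 1) = t ^ (γ - 1) * t ^ (e - γ) := by
    rw [← rpow_add ht]; ring_nf
  refine ((((hpow α).const_mul A).add ((hpow β).const_mul B)).sub
    ((hpow γ).const_mul D)).congr_deriv ?_
  rw [hsplit α, hsplit β]
  ring

lemma tendsto_mul_rpow_add_mul_rpow_sub_mul_rpow_nhdsGT_zero (hα : 0 < α) (hβ : 0 < β)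
    (hγ : 0 < γ) :
    Tendsto (fun t ↦ A * t ^ α + B * t ^ β - D * t ^ γ) (𝓝[>] 0) (𝓝 0) := by
  have hpow {e : ℝ} (he : 0 < e) : Tendsto (fun t : ℝ ↦ t ^ e) (𝓝 0) (𝓝 0) := by
    simpa [zero_rpow he.ne'] using (continuousAt_rpow_const 0 e (.inr he.le)).tendsto
  simpa using ((((hpow hα).const_mul A).add ((hpow hβ).const_mul B)).sub
    ((hpow hγ).const_mul D)).mono_left nhdsWithin_le_nhds

lemma tendsto_mul_rpow_add_mul_rpow_sub_mul_rpow_atTop (hD : 0 < D) (hαγ : α < γ)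
    (hβγ : β < γ) (hγ : 0 < γ) :
    Tendsto (fun t ↦ A * t ^ α + B * t ^ β - D * t ^ γ) atTop atBot := by
  refine ((tendsto_rpow_atTop hγ).atTop_mul_neg (neg_lt_zero.mpr hD)
    (tendsto_mul_rpow_add_mul_rpow_sub_atTop (a := A) (b := B) (sub_neg.mpr hαγ) (sub_neg.mpr hβγ))).congr' ?_
  filter_upwards [eventually_gt_atTop 0] with t ht
  exact (mul_rpow_add_mul_rpow_sub_mul_rpow_eq ht).symm

end ThreeTerm

theorem stmt_4_general (p q r δ A B D : ℝ)
    (hδp : δ < p) (hpq : p < q) (hqr : q < r)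
    (hA : 0 < A) (hB : 0 < B) (hD : 0 < D)
    (m : ℝ → ℝ)
    (hm : ∀ t, m t = A * t ^ (p - δ) + B * t ^ (q - δ) - D * t ^ (r - δ)) :
    ∃ tmax : ℝ, 0 < tmax ∧
      StrictMonoOn m (Set.Ioc 0 tmax) ∧
      StrictAntiOn m (Set.Ici tmax) ∧
      deriv m tmax = 0 ∧
      0 < m tmax ∧
      Filter.Tendsto m Filter.atTop Filter.atBot ∧
      ∀ t' : ℝ, 0 < t' → StrictMonoOn m (Set.Ioc 0 t') →
        StrictAntiOn m (Set.Ici t') → t' = tmax := by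
  have hm' : m = fun t ↦ A * t ^ (p - δ) + B * t ^ (q - δ) - D * t ^ (r - δ) := funext hm
  have hα : 0 < p - δ := by linarith
  have hβ : 0 < q - δ := by linarith
  have hγ : 0 < r - δ := by linarith
  have hαγ : p - δ - (r - δ) < 0 := by linarith
  have hβγ : q - δ - (r - δ) < 0 := by linarith
  set k : ℝ → ℝ := fun t ↦
    A * (p - δ) * t ^ (p - δ - (r - δ)) + B * (q - δ) * t ^ (q - δ - (r - δ)) - D * (r - δ)
  have hk : StrictAntiOn k (Ioi 0) := strictAntiOn_mul_rpow_add_mul_rpow_sub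
    (mul_pos hA hα) (mul_pos hB hβ).le hαγ hβγ.le
  obtain ⟨c, hc, hkc⟩ := exists_pos_eq_zero_of_continuousOn_Ioi
    continuousOn_mul_rpow_add_mul_rpow_sub
    ((tendsto_mul_rpow_add_mul_rpow_sub_nhdsGT_zero (mul_pos hA hα) (mul_pos hB hβ).le
      hαγ).eventually_gt_atTop 0)
    ((tendsto_mul_rpow_add_mul_rpow_sub_atTop hαγ hβγ).eventually_lt_const
      (neg_lt_zero.mpr (mul_pos hD hγ)))
  have hderiv (t : ℝ) (ht : 0 < t) : HasDerivAt m (t ^ (r - δ - 1) * k t) t :=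
    hm' ▸ hasDerivAt_mul_rpow_add_mul_rpow_sub_mul_rpow ht
  obtain ⟨hmono, hanti⟩ := strictMonoOn_Ioc_and_strictAntiOn_Ici_of_hasDerivAt hc hderiv
    (fun t ht ↦ mul_pos (rpow_pos_of_pos ht.1 _) (hkc ▸ hk ht.1 hc ht.2))
    (fun t ht ↦ mul_neg_of_pos_of_neg (rpow_pos_of_pos (hc.trans ht) _)
      (hkc ▸ hk hc (hc.trans ht) ht))
  refine ⟨c, hc, hmono, hanti, ?_, ?_, ?_, fun t' ht' hmono' hanti' ↦
    eq_of_strictMonoOn_Ioc_of_strictAntiOn_Ici ht' hc hmono' hanti' hmono hanti⟩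
  · rw [(hderiv c hc).deriv]
    exact mul_eq_zero_of_right _ hkc
  · exact hmono.lt_of_tendsto_nhdsGT hc
      (hm' ▸ tendsto_mul_rpow_add_mul_rpow_sub_mul_rpow_nhdsGT_zero hα hβ hγ)
  · exact hm' ▸ tendsto_mul_rpow_add_mul_rpow_sub_mul_rpow_atTop hD (by linarith) (by linarith) hγ

theorem stmt_4 (p q r δ A B D : ℝ)
    (hδ : 1 < δ) (hδp : δ < p) (hpq : p < q) (hqr : q < r)
    (hA : 0 < A) (hB : 0 < B) (hD : 0 < D)
    (m : ℝ → ℝ)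
    (hm : ∀ t, m t = A * t ^ (p - δ) + B * t ^ (q - δ) - D * t ^ (r - δ)) :
    ∃ tmax : ℝ, 0 < tmax ∧
      StrictMonoOn m (Set.Ioc 0 tmax) ∧
      StrictAntiOn m (Set.Ici tmax) ∧
      deriv m tmax = 0 ∧
      0 < m tmax ∧
      Filter.Tendsto m Filter.atTop Filter.atBot ∧
      ∀ t' : ℝ, 0 < t' → StrictMonoOn m (Set.Ioc 0 t') →
        StrictAntiOn m (Set.Ici t') → t' = tmax :=
  stmt_4_general p q r δ A B D hδp hpq hqr hA hB hD m hm
end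

section
/- Let 1 < δ < p < q < r, A, B, D > 0, and let m(t) = A t^{p-δ} + B t^{q-δ} - D t^{r-δ}, with unique critical point t_max > 0. For every c with 0 < c < m(t_max) there exist exactly two points 0 < t_1 < t_max < t_2 with m(t_1) = m(t_2) = c, and m'(t_1) > 0, m'(t_2) < 0. -/
open Set

theorem stmt_5 (p q r δ A B D : ℝ)
    (hδ : 1 < δ) (hδp : δ < p) (hpq : p < q) (hqr : q < r)
    (hA : 0 < A) (hB : 0 < B) (hD : 0 < D)
    (m : ℝ → ℝ)
    (hm : ∀ t, m t = A * t ^ (p - δ) + B * t ^ (q - δ) - D * t ^ (r - δ))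
    (tmax : ℝ) (htmax : 0 < tmax)
    (hmono : StrictMonoOn m (Set.Ioc 0 tmax))
    (hanti : StrictAntiOn m (Set.Ici tmax))
    (c : ℝ) (hc0 : 0 < c) (hc : c < m tmax) :
    ∃ t1 t2 : ℝ, 0 < t1 ∧ t1 < tmax ∧ tmax < t2 ∧
      m t1 = c ∧ m t2 = c ∧ 0 < deriv m t1 ∧ deriv m t2 < 0 ∧
      ∀ t : ℝ, 0 < t → m t = c → t = t1 ∨ t = t2 := by
  have hm' : m = fun t => A * t ^ (p - δ) + B * t ^ (q - δ) - D * t ^ (r - δ) := funext hm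
  subst hm'
  set f : ℝ → ℝ := fun t => A * t ^ (p - δ) + B * t ^ (q - δ) - D * t ^ (r - δ) with hf
  have hpδ : 0 < p - δ := by linarith
  have hqδ : 0 < q - δ := by linarith
  have hrδ : 0 < r - δ := by linarith
  have hqp : 0 < q - p := by linarith
  have hrq : 0 < r - q := by linarith
  -- continuity
  have hcont : Continuous f := by
    apply Continuous.sub
    apply Continuous.add
    · exact continuous_const.mul (continuous_iff_continuousAt.mpr fun x =>
        Real.continuousAt_rpow_const x _ (Or.inr hpδ.le))
    · exact continuous_const.mul (continuous_iff_continuousAt.mpr fun x =>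
        Real.continuousAt_rpow_const x _ (Or.inr hqδ.le))
    · exact continuous_const.mul (continuous_iff_continuousAt.mpr fun x =>
        Real.continuousAt_rpow_const x _ (Or.inr hrδ.le))
  have hf0 : f 0 = 0 := by
    simp [hf, Real.zero_rpow hpδ.ne', Real.zero_rpow hqδ.ne', Real.zero_rpow hrδ.ne']
  -- t1 exists
  obtain ⟨t1, ht1mem, ht1c⟩ := intermediate_value_Ioo htmax.le hcont.continuousOn
    (show c ∈ Ioo (f 0) (f tmax) from ⟨by rw [hf0]; exact hc0, hc⟩)
  obtain ⟨ht1pos, ht1lt⟩ := ht1mem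
  -- find large T with f T < c
  obtain ⟨T, hT1, hT2⟩ : ∃ T : ℝ, (A + B) / D < T ^ (r - q) ∧ max tmax 1 < T := by
    have h1 := (tendsto_rpow_atTop hrq).eventually_gt_atTop ((A + B) / D)
    exact (h1.and (Filter.eventually_gt_atTop (max tmax 1))).exists
  have hTmax : tmax < T := lt_of_le_of_lt (le_max_left _ _) hT2
  have hT1' : (1 : ℝ) < T := lt_of_le_of_lt (le_max_right _ _) hT2
  have hT0 : 0 < T := by linarith
  have hfT : f T < c := by
    have h1 : T ^ (p - δ) ≤ T ^ (q - δ) :=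
      Real.rpow_le_rpow_of_exponent_le hT1'.le (by linarith)
    have h2 : T ^ (r - δ) = T ^ (r - q) * T ^ (q - δ) := by
      rw [← Real.rpow_add hT0]; ring_nf
    have h3 : A + B < D * T ^ (r - q) := by
      rw [div_lt_iff₀ hD] at hT1; linarith
    have h4 : 0 < T ^ (q - δ) := Real.rpow_pos_of_pos hT0 _
    have : f T = A * T ^ (p - δ) + B * T ^ (q - δ) - D * T ^ (r - δ) := rfl
    rw [this, h2]
    nlinarith
  -- t2 exists
  obtain ⟨t2, ht2mem, ht2c⟩ := intermediate_value_Ioo' hTmax.le hcont.continuousOn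
    (show c ∈ Ioo (f T) (f tmax) from ⟨hfT, hc⟩)
  obtain ⟨ht2gt, ht2lt⟩ := ht2mem
  -- derivative
  have hd : ∀ t : ℝ, 0 < t → HasDerivAt f
      (A * ((p - δ) * t ^ (p - δ - 1)) + B * ((q - δ) * t ^ (q - δ - 1))
        - D * ((r - δ) * t ^ (r - δ - 1))) t := by
    intro t ht
    exact (((Real.hasDerivAt_rpow_const (Or.inl ht.ne')).const_mul A).add
      ((Real.hasDerivAt_rpow_const (Or.inl ht.ne')).const_mul B)).sub
      ((Real.hasDerivAt_rpow_const (Or.inl ht.ne')).const_mul D)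
  set g : ℝ → ℝ := fun t => A * (p - δ) * t ^ (p - q) + B * (q - δ)
      - D * (r - δ) * t ^ (r - q) with hg
  have hderiv_eq : ∀ t : ℝ, 0 < t → deriv f t = t ^ (q - δ - 1) * g t := by
    intro t ht
    rw [(hd t ht).deriv]
    have e1 : t ^ (p - δ - 1) = t ^ (q - δ - 1) * t ^ (p - q) := by
      rw [← Real.rpow_add ht]; ring_nf
    have e2 : t ^ (r - δ - 1) = t ^ (q - δ - 1) * t ^ (r - q) := by
      rw [← Real.rpow_add ht]; ring_nf
    rw [e1, e2]; simp only [hg]; ring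
  -- g strictly decreasing on positives
  have hg_anti : ∀ a b : ℝ, 0 < a → a < b → g b < g a := by
    intro a b ha hab
    have h1 : b ^ (p - q) < a ^ (p - q) := by
      rw [show p - q = -(q - p) by ring, Real.rpow_neg ha.le, Real.rpow_neg (by linarith : (0:ℝ) ≤ b)]
      exact inv_strictAnti₀ (Real.rpow_pos_of_pos ha _) (Real.rpow_lt_rpow ha.le hab hqp)
    have h2 : a ^ (r - q) < b ^ (r - q) := Real.rpow_lt_rpow ha.le hab hrq
    have hc1 : 0 < A * (p - δ) := mul_pos hA hpδ
    have hc2 : 0 < D * (r - δ) := mul_pos hD hrδ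
    simp only [hg]
    nlinarith
  -- sign of g at t1
  have hg1 : 0 < g t1 := by
    by_contra hcon
    push_neg at hcon
    have hderivneg : ∀ x ∈ interior (Icc t1 tmax), deriv f x < 0 := by
      intro x hx
      rw [interior_Icc] at hx
      have hx1 : 0 < x := lt_trans ht1pos hx.1
      rw [hderiv_eq x hx1]
      exact mul_neg_of_pos_of_neg (Real.rpow_pos_of_pos hx1 _)
        (lt_of_lt_of_le (hg_anti t1 x ht1pos hx.1) hcon)
    have hA' := strictAntiOn_of_deriv_neg (convex_Icc t1 tmax) hcont.continuousOn hderivneg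
    have h1 := hA' (left_mem_Icc.mpr ht1lt.le) (right_mem_Icc.mpr ht1lt.le) ht1lt
    have h2 := hmono ⟨ht1pos, ht1lt.le⟩ ⟨htmax, le_refl _⟩ ht1lt
    linarith
  -- sign of g at t2
  have hg2 : g t2 < 0 := by
    by_contra hcon
    push_neg at hcon
    have hderivpos : ∀ x ∈ interior (Icc tmax t2), 0 < deriv f x := by
      intro x hx
      rw [interior_Icc] at hx
      have hx1 : 0 < x := lt_trans htmax hx.1
      rw [hderiv_eq x hx1]
      exact mul_pos (Real.rpow_pos_of_pos hx1 _)
        (lt_of_le_of_lt hcon (hg_anti x t2 hx1 hx.2))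
    have hM := strictMonoOn_of_deriv_pos (convex_Icc tmax t2) hcont.continuousOn hderivpos
    have h1 := hM (left_mem_Icc.mpr ht2gt.le) (right_mem_Icc.mpr ht2gt.le) ht2gt
    have h2 := hanti self_mem_Ici ht2gt.le ht2gt
    linarith
  refine ⟨t1, t2, ht1pos, ht1lt, ht2gt, ht1c, ht2c, ?_, ?_, ?_⟩
  · rw [hderiv_eq t1 ht1pos]
    exact mul_pos (Real.rpow_pos_of_pos ht1pos _) hg1
  · rw [hderiv_eq t2 (lt_trans htmax ht2gt)]
    exact mul_neg_of_pos_of_neg (Real.rpow_pos_of_pos (lt_trans htmax ht2gt) _) hg2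
  · intro t ht htc
    rcases le_or_gt t tmax with h | h
    · left
      exact hmono.injOn ⟨ht, h⟩ ⟨ht1pos, ht1lt.le⟩ (htc.trans ht1c.symm)
    · right
      exact hanti.injOn (le_of_lt h) ht2gt.le (htc.trans ht2c.symm)
end

section
/- Let 1 < δ < p < q < r and P, Q, b̄ > 0, λ > 0 satisfy (p-δ)P + (q-δ)Q < λ(r-δ) b̄ and b̄ ≤ C (P^{r/p} + Q^{r/q}) for some C > 0 (subcritical Sobolev bound with ||b||_∞ absorbed into C). Then there exists A > 0 depending only on p, q, r, δ, C, λ such that P^{1/p} + Q^{1/q} ≥ A; moreover A can be chosen uniformly for λ in any bounded interval (0, λ₀]. -/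
theorem stmt_18 (p q r δ C lam0 : ℝ)
    (hδ : 1 < δ) (hδp : δ < p) (hpq : p < q) (hqr : q < r)
    (hC : 0 < C) (hlam0 : 0 < lam0) :
    ∃ A : ℝ, 0 < A ∧ ∀ lam P Q bbar : ℝ, 0 < lam → lam ≤ lam0 →
      0 < P → 0 < Q → 0 < bbar →
      (p - δ) * P + (q - δ) * Q < lam * (r - δ) * bbar →
      bbar ≤ C * (P ^ (r / p) + Q ^ (r / q)) →
      A ≤ P ^ (1 / p) + Q ^ (1 / q) := by
  have hpδ : 0 < p - δ := by linarith
  have hrδ : 0 < r - δ := by linarith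
  have hrq : 0 < r - q := by linarith
  have hp0 : 0 < p := by linarith
  have hq0 : 0 < q := by linarith
  set M := lam0 * (r - δ) * C with hMdef
  have hM0 : 0 < M := by positivity
  set A := min 1 (((p - δ) / M) ^ (1 / (r - q))) with hAdef
  have hA0 : 0 < A := lt_min one_pos (Real.rpow_pos_of_pos (div_pos hpδ hM0) _)
  have hA1 : A ≤ 1 := min_le_left _ _
  have hArq : A ^ (r - q) ≤ (p - δ) / M := by
    have h := min_le_right 1 (((p - δ) / M) ^ (1 / (r - q)))
    calc A ^ (r - q) ≤ ((((p - δ) / M) ^ (1 / (r - q)))) ^ (r - q) :=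
          Real.rpow_le_rpow hA0.le h hrq.le
      _ = (p - δ) / M := by
          rw [← Real.rpow_mul (le_of_lt (div_pos hpδ hM0)),
            one_div_mul_cancel hrq.ne', Real.rpow_one]
  have hMA : M * A ^ (r - q) ≤ p - δ := by
    rw [← le_div_iff₀' hM0]; exact hArq
  refine ⟨A, hA0, ?_⟩
  intro lam P Q bbar hlam hle hP hQ hb h1 h2
  by_contra hcon
  push_neg at hcon
  have hXp : 0 < P ^ (1 / p) := Real.rpow_pos_of_pos hP _
  have hYq : 0 < Q ^ (1 / q) := Real.rpow_pos_of_pos hQ _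
  have hX : P ^ (1 / p) < A := by linarith
  have hY : Q ^ (1 / q) < A := by linarith
  have hPr : P ^ (r / p) ≤ P * A ^ (r - q) := by
    have e1 : P ^ (r / p) = P * (P ^ (1 / p)) ^ (r - p) := by
      rw [← Real.rpow_mul hP.le]
      rw [show (1 / p) * (r - p) = r / p - 1 by field_simp]
      rw [Real.rpow_sub hP, Real.rpow_one]
      field_simp
    rw [e1]
    have h2 : (P ^ (1 / p)) ^ (r - p) ≤ A ^ (r - p) :=
      Real.rpow_le_rpow hXp.le hX.le (by linarith)
    have h3 : A ^ (r - p) ≤ A ^ (r - q) :=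
      Real.rpow_le_rpow_of_exponent_ge hA0 hA1 (by linarith)
    have := h2.trans h3
    nlinarith
  have hQr : Q ^ (r / q) ≤ Q * A ^ (r - q) := by
    have e1 : Q ^ (r / q) = Q * (Q ^ (1 / q)) ^ (r - q) := by
      rw [← Real.rpow_mul hQ.le]
      rw [show (1 / q) * (r - q) = r / q - 1 by field_simp]
      rw [Real.rpow_sub hQ, Real.rpow_one]
      field_simp
    rw [e1]
    have h2 : (Q ^ (1 / q)) ^ (r - q) ≤ A ^ (r - q) :=
      Real.rpow_le_rpow hYq.le hY.le (by linarith)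
    nlinarith
  have hb1 : bbar ≤ C * (P * A ^ (r - q) + Q * A ^ (r - q)) :=
    h2.trans (by gcongr)
  have hchain : lam * (r - δ) * bbar ≤ M * A ^ (r - q) * (P + Q) := by
    have h3 : lam * (r - δ) * bbar ≤
        lam0 * (r - δ) * (C * (P * A ^ (r - q) + Q * A ^ (r - q))) := by
      gcongr
    have h4 : lam0 * (r - δ) * (C * (P * A ^ (r - q) + Q * A ^ (r - q)))
        = M * A ^ (r - q) * (P + Q) := by rw [hMdef]; ring
    linarith
  have h5 : M * A ^ (r - q) * (P + Q) ≤ (p - δ) * (P + Q) :=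
    mul_le_mul_of_nonneg_right hMA (by positivity)
  nlinarith
end
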